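/- arXiv:2107.00116 — 3 statements merged into one kernel-verified Lean document; each statement's English description precedes it below -/
import Mathlib

section
/- Let κ be a Markov kernel from ℝ to ℝ. Let F : ℕ → ℝ → ℝ, let L ≥ 0, C ≥ 0 and γ ≥ 0 be real constants with γ * C < 1. Assume that for every s ∈ ℝ, |deriv (F 0) s| ≤ L, and that for every k ∈ ℕ and s ∈ ℝ, |deriv (F (k+1)) s| ≤ C * ∫ |deriv (F k) x| ∂(κ s). Let Q : ℝ → ℝ be a function whose derivative can be computed term by term, i.e., for every s ∈ ℝ, deriv Q s = ∑' (k : ℕ), γ^k * deriv (F k) s. Then for every s ∈ ℝ, |deriv Q s| ≤ L / (1 - γ * C). (This is the one-dimensional version of the paper's main theorem: under the recursive condition (9), the optimal Q-function Q(s) = Σ_k γ^k E[r(s_{t+k}) | s_t = s] has derivative bounded by L · Σ_k (γC)^k = L/(1 − γC).) -/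
open MeasureTheory ProbabilityTheory

theorem stmt_1 (κ : Kernel ℝ ℝ) [IsMarkovKernel κ]
    (F : ℕ → ℝ → ℝ) (L C γ : ℝ) (hL : 0 ≤ L) (hC : 0 ≤ C) (hγ : 0 ≤ γ)
    (hγC : γ * C < 1)
    (hbase : ∀ s : ℝ, |deriv (F 0) s| ≤ L)
    (hrec : ∀ (k : ℕ) (s : ℝ),
      |deriv (F (k + 1)) s| ≤ C * ∫ x, |deriv (F k) x| ∂(κ s))
    (Q : ℝ → ℝ)
    (hQ : ∀ s : ℝ, deriv Q s = ∑' (k : ℕ), γ ^ k * deriv (F k) s) :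
    ∀ s : ℝ, |deriv Q s| ≤ L / (1 - γ * C) := by
  have hbound : ∀ k : ℕ, ∀ s : ℝ, |deriv (F k) s| ≤ C ^ k * L := by
    intro k
    induction k with
    | zero => simpa using hbase
    | succ k ih =>
      intro s
      have hCkL : 0 ≤ C ^ k * L := mul_nonneg (pow_nonneg hC k) hL
      have hint : ∫ x, |deriv (F k) x| ∂(κ s) ≤ C ^ k * L := by
        have h1 : ‖∫ x, |deriv (F k) x| ∂(κ s)‖ ≤ C ^ k * L * ((κ s) Set.univ).toReal := by
          apply norm_integral_le_of_norm_le_const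
          filter_upwards with x
          simpa [abs_abs] using ih x
        have : ((κ s) Set.univ).toReal = 1 := by simp
        rw [this, mul_one] at h1
        exact (le_abs_self _).trans (by simpa using h1)
      calc |deriv (F (k+1)) s| ≤ C * ∫ x, |deriv (F k) x| ∂(κ s) := hrec k s
        _ ≤ C * (C ^ k * L) := by exact mul_le_mul_of_nonneg_left hint hC
        _ = C ^ (k+1) * L := by ring
  intro s
  rw [hQ s]
  have h0 : 0 ≤ γ * C := mul_nonneg hγ hC
  have hsum : HasSum (fun k : ℕ => (γ * C) ^ k * L) ((1 - γ * C)⁻¹ * L) :=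
    (hasSum_geometric_of_lt_one h0 hγC).mul_right L
  have := tsum_of_norm_bounded hsum (f := fun k : ℕ => γ ^ k * deriv (F k) s) ?_
  · rw [div_eq_inv_mul]
    simpa using this
  · intro k
    rw [Real.norm_eq_abs, abs_mul, abs_pow, abs_of_nonneg hγ, mul_pow]
    calc γ ^ k * |deriv (F k) s| ≤ γ ^ k * (C ^ k * L) :=
          mul_le_mul_of_nonneg_left (hbound k s) (pow_nonneg hγ k)
      _ = γ ^ k * C ^ k * L := by ring
end

section
/- Fix N : ℕ and let S = EuclideanSpace ℝ (Fin N). Let κ be a Markov kernel from S to S. Let F : ℕ → S → ℝ, and let L ≥ 0 and C ≥ 0 be real constants. Denote by e i (for i : Fin N) the i-th standard basis vector of S. Assume (base case) that for every s ∈ S, ‖fderiv ℝ (F 0) s‖ ≤ L, and (recursive condition) that for every i : Fin N, every k ∈ ℕ and every s ∈ S, |fderiv ℝ (F (k+1)) s (e i)| ≤ C * ∫ |fderiv ℝ (F k) x (e i)| ∂(κ s). Then for every i : Fin N, every k ∈ ℕ and every s ∈ S, |fderiv ℝ (F k) s (e i)| ≤ C^k * L. (This is Proposition 2 of the paper: under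 the coordinatewise inequality (condition (5)/(21)), every partial derivative of the k-step expected reward is bounded by C^k L.) -/
open MeasureTheory ProbabilityTheory

theorem stmt_3 (N : ℕ)
    (κ : Kernel (EuclideanSpace ℝ (Fin N)) (EuclideanSpace ℝ (Fin N)))
    [IsMarkovKernel κ]
    (F : ℕ → EuclideanSpace ℝ (Fin N) → ℝ) (L C : ℝ) (hL : 0 ≤ L) (hC : 0 ≤ C)
    (hbase : ∀ s : EuclideanSpace ℝ (Fin N), ‖fderiv ℝ (F 0) s‖ ≤ L)
    (hrec : ∀ (i : Fin N) (k : ℕ) (s : EuclideanSpace ℝ (Fin N)),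
      |fderiv ℝ (F (k + 1)) s (EuclideanSpace.basisFun (Fin N) ℝ i)| ≤
        C * ∫ x, |fderiv ℝ (F k) x (EuclideanSpace.basisFun (Fin N) ℝ i)| ∂(κ s)) :
    ∀ (i : Fin N) (k : ℕ) (s : EuclideanSpace ℝ (Fin N)),
      |fderiv ℝ (F k) s (EuclideanSpace.basisFun (Fin N) ℝ i)| ≤ C ^ k * L := by
  intro i k
  induction k with
  | zero =>
    intro s
    simp only [pow_zero, one_mul]
    calc |fderiv ℝ (F 0) s (EuclideanSpace.basisFun (Fin N) ℝ i)|
        ≤ ‖fderiv ℝ (F 0) s‖ * ‖EuclideanSpace.basisFun (Fin N) ℝ i‖ :=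
          (fderiv ℝ (F 0) s).le_opNorm _
      _ ≤ L := by
          rw [show ‖(EuclideanSpace.basisFun (Fin N) ℝ) i‖ = 1 from (EuclideanSpace.basisFun (Fin N) ℝ).orthonormal.1 i, mul_one]
          exact hbase s
  | succ k ih =>
    intro s
    have hint : (∫ x, |fderiv ℝ (F k) x (EuclideanSpace.basisFun (Fin N) ℝ i)| ∂(κ s))
        ≤ C ^ k * L := by
      by_cases h : Integrable
          (fun x => |fderiv ℝ (F k) x (EuclideanSpace.basisFun (Fin N) ℝ i)|) (κ s)
      · calc (∫ x, |fderiv ℝ (F k) x (EuclideanSpace.basisFun (Fin N) ℝ i)| ∂(κ s))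
            ≤ ∫ _, C ^ k * L ∂(κ s) :=
              integral_mono h (integrable_const _) fun x => ih x
          _ = C ^ k * L := by simp
      · rw [integral_undef h]
        positivity
    calc |fderiv ℝ (F (k + 1)) s (EuclideanSpace.basisFun (Fin N) ℝ i)|
        ≤ C * ∫ x, |fderiv ℝ (F k) x (EuclideanSpace.basisFun (Fin N) ℝ i)| ∂(κ s) :=
          hrec i k s
      _ ≤ C * (C ^ k * L) := by gcongr
      _ = C ^ (k + 1) * L := by ring
end

section
/- Fix N : ℕ and let S = EuclideanSpace ℝ (Fin N). Let κ be a Markov kernel from S to S, let F : ℕ → S → ℝ, and let L ≥ 0, C ≥ 0 and γ ≥ 0 be real constants with γ * C < 1. Denote by e i the i-th standard basis vector of S. Assume that for every s ∈ S, ‖fderiv ℝ (F 0) s‖ ≤ L, and that for every i : Fin N, k ∈ ℕ and s ∈ S, |fderiv ℝ (F (k+1)) s (e i)| ≤ C * ∫ |fderiv ℝ (F k) x (e i)| ∂(κ s). Let Q : S → ℝ be a function whose partial derivatives can be computed term by term, i.e., for every s ∈ S and every i : Fin N, fderiv ℝ Q s (e i) = ∑' (k : ℕ), γ^k * fderiv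 ℝ (F k) s (e i). Then for every s ∈ S, ‖fderiv ℝ Q s‖ ≤ Real.sqrt N * L / (1 - γ * C). (This is Theorem 1 of the paper: under the coordinatewise recursive condition, the gradient of the optimal Q-function Q(s) = Σ_k γ^k E[r(s_{t+k}) | s_t = s] has norm at most √N · L · Σ_k (γC)^k.) -/
/-!
Each partial derivative `∂ᵢ F k` is bounded by `C ^ k * L`: for `k = 0` by the gradient bound, and
inductively because integrating against a probability measure preserves a uniform bound. Hence
`|∂ᵢ Q| ≤ ∑ₖ (γ C) ^ k L = L / (1 - γ C)` for every coordinate, and a linear functional on `ℝ^N`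
whose values on an orthonormal basis are bounded by `M` has norm at most `√N * M`.
-/

open MeasureTheory ProbabilityTheory

lemma abs_le_pow_mul_of_abs_succ_le_mul_integral {X : Type*} [MeasurableSpace X]
    (κ : Kernel X X) [IsMarkovKernel κ] (g : ℕ → X → ℝ) {L C : ℝ} (hC : 0 ≤ C)
    (h0 : ∀ x, |g 0 x| ≤ L) (hsucc : ∀ k x, |g (k + 1) x| ≤ C * ∫ y, |g k y| ∂(κ x)) :
    ∀ k x, |g k x| ≤ C ^ k * L := by
  intro k
  induction k with
  | zero => simpa using h0
  | succ k ih =>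
    intro x
    -- `integral_mono_of_nonneg` needs no integrability of `|g k|`: otherwise its integral is `0`
    have hint : ∫ y, |g k y| ∂(κ x) ≤ C ^ k * L := by
      calc ∫ y, |g k y| ∂(κ x) ≤ ∫ _, C ^ k * L ∂(κ x) :=
            integral_mono_of_nonneg (ae_of_all _ fun y => abs_nonneg _) (integrable_const _)
              (ae_of_all _ ih)
        _ = C ^ k * L := by simp
    calc |g (k + 1) x| ≤ C * ∫ y, |g k y| ∂(κ x) := hsucc k x
      _ ≤ C * (C ^ k * L) := mul_le_mul_of_nonneg_left hint hC
      _ = C ^ (k + 1) * L := by ring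

lemma abs_tsum_pow_mul_le_div {γ C M : ℝ} {a : ℕ → ℝ} (hγ : 0 ≤ γ) (hC : 0 ≤ C)
    (hγC : γ * C < 1) (ha : ∀ k, |a k| ≤ C ^ k * M) :
    |∑' k, γ ^ k * a k| ≤ M / (1 - γ * C) := by
  have hgeom : HasSum (fun k => (γ * C) ^ k * M) ((1 - γ * C)⁻¹ * M) :=
    (hasSum_geometric_of_lt_one (mul_nonneg hγ hC) hγC).mul_right M
  rw [div_eq_inv_mul, ← Real.norm_eq_abs]
  refine tsum_of_norm_bounded hgeom fun k => ?_
  calc ‖γ ^ k * a k‖ = γ ^ k * |a k| := by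
        rw [Real.norm_eq_abs, abs_mul, abs_pow, abs_of_nonneg hγ]
    _ ≤ γ ^ k * (C ^ k * M) := mul_le_mul_of_nonneg_left (ha k) (pow_nonneg hγ k)
    _ = (γ * C) ^ k * M := by ring

lemma OrthonormalBasis.norm_le_sqrt_card_mul_of_norm_apply_le {ι 𝕜 E : Type*} [Fintype ι]
    [RCLike 𝕜] [NormedAddCommGroup E] [InnerProductSpace 𝕜 E] [CompleteSpace E]
    (b : OrthonormalBasis ι 𝕜 E) (f : StrongDual 𝕜 E) {M : ℝ} (hM : 0 ≤ M)
    (hf : ∀ i, ‖f (b i)‖ ≤ M) :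
    ‖f‖ ≤ √(Fintype.card ι) * M := by
  set v := (InnerProductSpace.toDual 𝕜 E).symm f
  have hv : ∀ i, ‖inner 𝕜 (b i) v‖ = ‖f (b i)‖ := fun i => by
    rw [← inner_conj_symm, RCLike.norm_conj, InnerProductSpace.toDual_symm_apply]
  calc ‖f‖ = ‖v‖ := ((InnerProductSpace.toDual 𝕜 E).symm.norm_map f).symm
    _ ≤ √(Fintype.card ι) * ⨆ i, ‖inner 𝕜 (b i) v‖ := b.norm_le_card_mul_iSup_norm_inner v
    _ ≤ √(Fintype.card ι) * M := by
        gcongr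
        exact Real.iSup_le (fun i => (hv i).trans_le (hf i)) hM

theorem stmt_4 (N : ℕ)
    (κ : Kernel (EuclideanSpace ℝ (Fin N)) (EuclideanSpace ℝ (Fin N)))
    [IsMarkovKernel κ]
    (F : ℕ → EuclideanSpace ℝ (Fin N) → ℝ) (L C γ : ℝ)
    (hL : 0 ≤ L) (hC : 0 ≤ C) (hγ : 0 ≤ γ) (hγC : γ * C < 1)
    (hbase : ∀ s : EuclideanSpace ℝ (Fin N), ‖fderiv ℝ (F 0) s‖ ≤ L)
    (hrec : ∀ (i : Fin N) (k : ℕ) (s : EuclideanSpace ℝ (Fin N)),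
      |fderiv ℝ (F (k + 1)) s (EuclideanSpace.basisFun (Fin N) ℝ i)| ≤
        C * ∫ x, |fderiv ℝ (F k) x (EuclideanSpace.basisFun (Fin N) ℝ i)| ∂(κ s))
    (Q : EuclideanSpace ℝ (Fin N) → ℝ)
    (hQ : ∀ (s : EuclideanSpace ℝ (Fin N)) (i : Fin N),
      fderiv ℝ Q s (EuclideanSpace.basisFun (Fin N) ℝ i) =
        ∑' (k : ℕ), γ ^ k * fderiv ℝ (F k) s (EuclideanSpace.basisFun (Fin N) ℝ i)) :
    ∀ s : EuclideanSpace ℝ (Fin N),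
      ‖fderiv ℝ Q s‖ ≤ Real.sqrt N * L / (1 - γ * C) := by
  intro s
  set e := EuclideanSpace.basisFun (Fin N) ℝ
  have hpartial0 : ∀ i x, |fderiv ℝ (F 0) x (e i)| ≤ L := fun i x =>
    calc |fderiv ℝ (F 0) x (e i)| ≤ ‖fderiv ℝ (F 0) x‖ * ‖e i‖ := (fderiv ℝ (F 0) x).le_opNorm _
      _ ≤ L := by rw [e.orthonormal.1 i, mul_one]; exact hbase x
  have hpartial : ∀ i k x, |fderiv ℝ (F k) x (e i)| ≤ C ^ k * L := fun i =>
    abs_le_pow_mul_of_abs_succ_le_mul_integral κ (fun k x => fderiv ℝ (F k) x (e i)) hC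
      (hpartial0 i) (hrec i)
  have hQpartial : ∀ i, ‖fderiv ℝ Q s (e i)‖ ≤ L / (1 - γ * C) := fun i => by
    rw [Real.norm_eq_abs, hQ s i]
    exact abs_tsum_pow_mul_le_div hγ hC hγC fun k => hpartial i k s
  calc ‖fderiv ℝ Q s‖ ≤ √(Fintype.card (Fin N)) * (L / (1 - γ * C)) :=
        e.norm_le_sqrt_card_mul_of_norm_apply_le _ (div_nonneg hL (by linarith)) hQpartial
    _ = Real.sqrt N * L / (1 - γ * C) := by rw [Fintype.card_fin, mul_div_assoc]
end
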